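/- Let n ≥ 1 and let w ∈ ℤ with w > 0. Let x', x ∈ {0,1}^n satisfy x'_1 = 1, x_1 = 0, and |x_{[2..n]}| ≥ n − w + 1. Then for every y ∈ {0,1}^n one has f_w(x,y) < f_w(x',x). Consequently the state (x',x) is absorbing for the time-linkage (1+1) EA on f_w, so started from (x',x) the (1+1) EA never reaches the global optimum. -/

import Mathlib

open scoped Classical BigOperators ENNReal

noncomputable section

/-- Bitstrings of length `n`. -/
abbrev BitStr (n : ℕ) := Fin n → Bool

/-- The number of one-bits of a bitstring. -/
def ones {n : ℕ} (x : BitStr n) : ℕ := (Finset.univ.filter fun i => x i = true).card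

/-- The number of zero-bits of a bitstring. -/
def zeros {n : ℕ} (x : BitStr n) : ℕ := (Finset.univ.filter fun i => x i = false).card

/-- The first bit of a bitstring (`false` if `n = 0`). -/
def firstBit {n : ℕ} (x : BitStr n) : Bool := if h : 0 < n then x ⟨0, h⟩ else false

/-- The number of one-bits among the last `n-1` positions. -/
def onesTail {n : ℕ} (x : BitStr n) : ℕ :=
  (Finset.univ.filter fun i : Fin n => x i = true ∧ (i : ℕ) ≠ 0).card

/-- The all-ones bitstring `1^n`. -/
def allOnes (n : ℕ) : BitStr n := fun _ => true

/-- The time-linkage OneMax function `f_w(x, y) = |y| + w·x₁`, where `x` is the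
previous solution and `y` is the current one. -/
def fW {n : ℕ} (w : ℤ) (x y : BitStr n) : ℤ :=
  (ones y : ℤ) + (if firstBit x then w else 0)

/-- States of the time-linkage algorithms: (previous solution, current solution). -/
abbrev TLState (n : ℕ) := BitStr n × BitStr n

/-- Hamming distance between two bitstrings. -/
def hamming {n : ℕ} (x y : BitStr n) : ℕ := (Finset.univ.filter fun i => x i ≠ y i).card

/-- Standard bit-wise mutation, flipping each bit independently with probability `1/n`:
`mutEA x y` is the probability that mutating `x` yields `y`. -/
def mutEA {n : ℕ} (x y : BitStr n) : ℝ :=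
  (1 / n : ℝ) ^ hamming x y * (1 - 1 / n) ^ (n - hamming x y)

/-- RLS mutation, flipping exactly one bit chosen uniformly at random:
`mutRLS x y` is the probability that mutating `x` yields `y`. -/
def mutRLS {n : ℕ} (x y : BitStr n) : ℝ :=
  if hamming x y = 1 then (1 / n : ℝ) else 0

/-- Transition matrix of the time-linkage (1+1)-type algorithm with mutation
distribution `m` on `f_w`: at state `(x', x)`, an offspring `y` sampled from
`m x ·` is accepted (the state moving to `(x, y)`) iff `f_w(x, y) ≥ f_w(x', x)`;
otherwise the state stays at `(x', x)`. -/
def tlTrans {n : ℕ} (m : BitStr n → BitStr n → ℝ) (w : ℤ) (s t : TLState n) : ℝ :=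
  (∑ y : BitStr n, if fW w s.1 s.2 ≤ fW w s.2 y ∧ t = (s.2, y) then m s.2 y else 0) +
    if t = s then ∑ y : BitStr n, if ¬ fW w s.1 s.2 ≤ fW w s.2 y then m s.2 y else 0 else 0

/-- Transition matrix of the time-linkage (1+1) EA on `f_w`. -/
def transEA {n : ℕ} (w : ℤ) : TLState n → TLState n → ℝ := tlTrans mutEA w

/-- Transition matrix of the time-linkage RLS on `f_w`. -/
def transRLS {n : ℕ} (w : ℤ) : TLState n → TLState n → ℝ := tlTrans mutRLS w

/-- Probability that the chain with transition matrix `P` started at `s`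
visits a state in `E` within the first `T` steps (including time 0). -/
def hitWithin {n : ℕ} (P : TLState n → TLState n → ℝ) (E : TLState n → Prop) :
    ℕ → TLState n → ℝ
  | 0, s => if E s then 1 else 0
  | T + 1, s => if E s then 1 else ∑ t : TLState n, P s t * hitWithin P E T t

/-- Probability that the chain started at `s` ever visits a state in `E`. -/
def hitProb {n : ℕ} (P : TLState n → TLState n → ℝ) (E : TLState n → Prop)
    (s : TLState n) : ℝ := ⨆ T : ℕ, hitWithin P E T s

/-- Probability that the chain started at `s` visits a state in `E` at some
time `≥ 1` (i.e. at a strictly later time). -/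
def hitProbLater {n : ℕ} (P : TLState n → TLState n → ℝ) (E : TLState n → Prop)
    (s : TLState n) : ℝ := ⨆ T : ℕ, ∑ t : TLState n, P s t * hitWithin P E T t

/-- Probability that the chain started at `s` visits `A` within `T` steps
without having visited `B` strictly before (`A` has priority on common states). -/
def raceWithin {n : ℕ} (P : TLState n → TLState n → ℝ) (A B : TLState n → Prop) :
    ℕ → TLState n → ℝ
  | 0, s => if A s then 1 else 0
  | T + 1, s =>
      if A s then 1 else if B s then 0 else ∑ t : TLState n, P s t * raceWithin P A B T t

/-- Probability that the chain started at `s` eventually visits `A` before `B`,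
i.e. reaches `A` without having visited `B` strictly before. -/
def raceProb {n : ℕ} (P : TLState n → TLState n → ℝ) (A B : TLState n → Prop)
    (s : TLState n) : ℝ := ⨆ T : ℕ, raceWithin P A B T s

/-- Probability that the chain started at `s` enters the set `A` within `T`
steps and at the first entrance time is in `E`. -/
def firstHitInWithin {n : ℕ} (P : TLState n → TLState n → ℝ) (A E : TLState n → Prop) :
    ℕ → TLState n → ℝ
  | 0, s => if A s then (if E s then 1 else 0) else 0
  | T + 1, s =>
      if A s then (if E s then 1 else 0)
      else ∑ t : TLState n, P s t * firstHitInWithin P A E T t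

/-- Probability that the chain started at `s` eventually enters the set `A`
and at the first entrance time is in `E`. -/
def firstHitInProb {n : ℕ} (P : TLState n → TLState n → ℝ) (A E : TLState n → Prop)
    (s : TLState n) : ℝ := ⨆ T : ℕ, firstHitInWithin P A E T s

/-- Expected hitting time of `E` for the chain started at `s` (in `ℝ≥0∞`),
via `E[τ] = ∑_{T ≥ 0} P[τ > T]`. -/
def expHitTime {n : ℕ} (P : TLState n → TLState n → ℝ) (E : TLState n → Prop)
    (s : TLState n) : ℝ≥0∞ := ∑' T : ℕ, ENNReal.ofReal (1 - hitWithin P E T s)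

/-- Probability that the chain started at `s` never visits a state in `B`. -/
def avoidProb {n : ℕ} (P : TLState n → TLState n → ℝ) (B : TLState n → Prop)
    (s : TLState n) : ℝ := 1 - hitProb P B s

/-- `E[τ_E · 1_{B is never visited}]` for the chain started at `s` (in `ℝ≥0∞`),
using `P[τ_E > T and B never visited] = P[B never visited] − P[E hit within T
steps, avoiding B]`, which is valid whenever `B` cannot be visited anymore once
`E` has been reached. -/
def expHitTimeAvoid {n : ℕ} (P : TLState n → TLState n → ℝ) (E B : TLState n → Prop)
    (s : TLState n) : ℝ≥0∞ :=
  ∑' T : ℕ, ENNReal.ofReal (avoidProb P B s - raceWithin P E B T s)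

/-- The global optimum for negative weight `w < 0`: the current solution is
`1^n` and the stored previous first bit is `0`. -/
def OptNeg {n : ℕ} (s : TLState n) : Prop := s.2 = allOnes n ∧ firstBit s.1 = false

/-- The global optimum for positive weight `w > 0`: the current solution is
`1^n` and the stored previous first bit is `1`. -/
def OptPos {n : ℕ} (s : TLState n) : Prop := s.2 = allOnes n ∧ firstBit s.1 = true

/-- Event I for the (1+1) EA (for `w < -1`): first bit pattern `(0,1)`,
current solution not `1^n`, and `|x_{[2..n]}| ≥ w + n`. -/
def EventIEA {n : ℕ} (w : ℤ) (s : TLState n) : Prop :=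
  firstBit s.1 = false ∧ firstBit s.2 = true ∧ s.2 ≠ allOnes n ∧
    w + n ≤ (onesTail s.2 : ℤ)

/-- Event I for the RLS (for `w < -1`): first bit pattern `(0,1)` and the
current solution is not `1^n`. -/
def EventIRLS {n : ℕ} (s : TLState n) : Prop :=
  firstBit s.1 = false ∧ firstBit s.2 = true ∧ s.2 ≠ allOnes n

/-- Event II: the current solution is `1^n` and the stored first bit is `1`. -/
def EventII {n : ℕ} (s : TLState n) : Prop :=
  firstBit s.1 = true ∧ s.2 = allOnes n

/-- Event III for the (1+1) EA (for `w > 0`): first bit pattern `(1,0)` and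
`|x_{[2..n]}| ≥ n - w + 1`. -/
def EventIIIEA {n : ℕ} (w : ℤ) (s : TLState n) : Prop :=
  firstBit s.1 = true ∧ firstBit s.2 = false ∧ (n : ℤ) - w + 1 ≤ (onesTail s.2 : ℤ)

/-- Event III for the RLS (for `w > 1`): first bit pattern `(1,0)`. -/
def EventIIIRLS {n : ℕ} (s : TLState n) : Prop :=
  firstBit s.1 = true ∧ firstBit s.2 = false

/-- Euler's number `e`. -/
def eu : ℝ := Real.exp 1

end

/-!
Since `x₁ = 0`, the state `(x', x)` has fitness `|x| + w = |x_{[2..n]}| + w ≥ n + 1`, whereas an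
offspring `y` of `x` earns no bonus and has fitness `|y| ≤ n`. So every offspring is rejected and
the chain stays at `(x', x)` forever; as `x ≠ 1^n`, it never sees the optimum.
-/

theorem ones_le {n : ℕ} (x : BitStr n) : ones x ≤ n := by
  simpa [ones] using Finset.card_filter_le Finset.univ fun i => x i = true

theorem ones_eq_onesTail_of_firstBit_eq_false {n : ℕ} {x : BitStr n}
    (hx : firstBit x = false) : ones x = onesTail x := by
  unfold ones onesTail
  congr 1
  ext i
  simp only [Finset.mem_filter, Finset.mem_univ, true_and, iff_self_and]
  intro hi hi0
  have h0 : 0 < n := i.pos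
  rw [firstBit, dif_pos h0, show (⟨0, h0⟩ : Fin n) = i from Fin.ext hi0.symm, hi] at hx
  exact Bool.noConfusion hx

theorem pos_of_firstBit_eq_true {n : ℕ} {x : BitStr n} (hx : firstBit x = true) : 0 < n := by
  by_contra h
  simp [firstBit, h] at hx

theorem firstBit_allOnes {n : ℕ} (hn : 0 < n) : firstBit (allOnes n) = true := by
  simp [firstBit, allOnes, hn]

theorem mutEA_eq_prod {n : ℕ} (x y : BitStr n) :
    mutEA x y = ∏ i, if x i ≠ y i then (1 / n : ℝ) else 1 - 1 / n := by
  have hcard :=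
    Finset.card_filter_add_card_filter_not (s := Finset.univ) fun i : Fin n => x i ≠ y i
  rw [Finset.card_univ, Fintype.card_fin] at hcard
  rw [Finset.prod_ite, Finset.prod_const, Finset.prod_const, mutEA, hamming]
  congr 2
  omega

theorem sum_mutEA {n : ℕ} (x : BitStr n) : ∑ y : BitStr n, mutEA x y = 1 := by
  simp_rw [mutEA_eq_prod]
  rw [← Fintype.prod_sum fun i (b : Bool) => if x i ≠ b then (1 / n : ℝ) else 1 - 1 / n]
  refine Finset.prod_eq_one fun i _ => ?_
  cases x i <;> simp

theorem tlTrans_eq_ite_of_forall_lt {n : ℕ} {m : BitStr n → BitStr n → ℝ}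
    {w : ℤ} {x' x : BitStr n} (hm : ∑ y, m x y = 1) (hlt : ∀ y, fW w x y < fW w x' x)
    (t : TLState n) : tlTrans m w (x', x) t = if t = (x', x) then 1 else 0 := by
  have hrej : ∀ y, ¬ fW w x' x ≤ fW w x y := fun y => not_le.2 (hlt y)
  simp only [tlTrans, hrej, false_and, if_false, not_false_eq_true, if_true,
    Finset.sum_const_zero, zero_add, hm]

theorem hitWithin_eq_zero_of_absorbing {n : ℕ} {P : TLState n → TLState n → ℝ}
    {E : TLState n → Prop} {s : TLState n} (hP : ∀ t, P s t = if t = s then 1 else 0)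
    (hs : ¬ E s) (T : ℕ) : hitWithin P E T s = 0 := by
  induction T with
  | zero => simp [hitWithin, hs]
  | succ T ih => simp [hitWithin, hs, hP, ih]

theorem hitProb_eq_zero_of_absorbing {n : ℕ} {P : TLState n → TLState n → ℝ}
    {E : TLState n → Prop} {s : TLState n} (hP : ∀ t, P s t = if t = s then 1 else 0)
    (hs : ¬ E s) : hitProb P E s = 0 := by
  simp [hitProb, hitWithin_eq_zero_of_absorbing hP hs]

theorem stmt5_general (n : ℕ) (w : ℤ)
    (x' x : BitStr n) (hx' : firstBit x' = true) (hx : firstBit x = false)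
    (htail : (n : ℤ) - w + 1 ≤ (onesTail x : ℤ)) :
    (∀ y : BitStr n, fW w x y < fW w x' x) ∧
    (∀ t : TLState n, transEA w (x', x) t = if t = (x', x) then 1 else 0) ∧
    hitProb (transEA w) (OptPos (n := n)) (x', x) = 0 := by
  have hlt : ∀ y : BitStr n, fW w x y < fW w x' x := by
    intro y
    have hy : (ones y : ℤ) ≤ n := by exact_mod_cast ones_le y
    simp only [fW, hx, hx', ones_eq_onesTail_of_firstBit_eq_false hx, Bool.false_eq_true,
      if_false, if_true]
    omega
  have habs := tlTrans_eq_ite_of_forall_lt (sum_mutEA x) hlt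
  have hnotOpt : ¬ OptPos (x', x) := by
    rintro ⟨hx1, -⟩
    rw [show x = allOnes n from hx1, firstBit_allOnes (pos_of_firstBit_eq_true hx')] at hx
    exact Bool.noConfusion hx
  exact ⟨hlt, habs, hitProb_eq_zero_of_absorbing habs hnotOpt⟩

/-- For `w > 0`, a state `(x', x)` with first bit pattern
`(1, 0)` and `|x_{[2..n]}| ≥ n - w + 1` has strictly better fitness than any
possible offspring, hence it is absorbing for the time-linkage (1+1) EA on
`f_w` and the EA started there never reaches the global optimum. -/
theorem stmt5 (n : ℕ) (hn : 1 ≤ n) (w : ℤ) (hw : 0 < w)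
    (x' x : BitStr n) (hx' : firstBit x' = true) (hx : firstBit x = false)
    (htail : (n : ℤ) - w + 1 ≤ (onesTail x : ℤ)) :
    (∀ y : BitStr n, fW w x y < fW w x' x) ∧
    (∀ t : TLState n, transEA w (x', x) t = if t = (x', x) then 1 else 0) ∧
    hitProb (transEA w) (OptPos (n := n)) (x', x) = 0 :=
  stmt5_general n w x' x hx' hx htail
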